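/- Let σ be an a-state, δ a p-state, and c a normalized conditional plan that is regressable with respect to (σ,δ). Then Regress*(c,δ) = δ' for some p-state δ' ≠ ⊥, and σ ∈ ext(δ'). -/

import Mathlib

open scoped Classical

/-! ## States -/

/-- A state: a pair of finite sets of fluents (true ones and false ones).
Used for both a-states (when the two sets are disjoint, see `St.OK`) and
p-states (partial states). -/
structure St (V : Type*) where
  T : Finset V
  F : Finset V
deriving DecidableEq

variable {V : Type*} [DecidableEq V]

/-- A pair of sets of fluents is a genuine (a- or p-) state when the sets are disjoint. -/
def St.OK (s : St V) : Prop := Disjoint s.T s.F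

/-- The extension set `ext(δ)` of a p-state `δ`: all a-states extending it. -/
def exts (δ : St V) : Set (St V) := {σ | σ.OK ∧ δ.T ⊆ σ.T ∧ δ.F ⊆ σ.F}

/-- `δ'` is a partial extension of `δ`. -/
def pext (δ δ' : St V) : Prop := δ.T ⊆ δ'.T ∧ δ.F ⊆ δ'.F

/-! ## Actions -/

/-- A non-sensing action: precondition literals (positive part `preP`, negative part
`preN`), and disjoint add and delete lists. -/
structure NAct (V : Type*) where
  preP : Finset V
  preN : Finset V
  add : Finset V
  del : Finset V
  hdisj : Disjoint add del

/-- A sensing action: precondition literals and a set of sensed fluents not occurring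
in the precondition. -/
structure SAct (V : Type*) where
  preP : Finset V
  preN : Finset V
  sens : Finset V
  hsens : Disjoint sens (preP ∪ preN)

/-- Executability of a non-sensing action in an a-state. -/
def NAct.execIn (a : NAct V) (σ : St V) : Prop := a.preP ⊆ σ.T ∧ a.preN ⊆ σ.F

/-- Executability of a sensing action in an a-state. -/
def SAct.execIn (a : SAct V) (σ : St V) : Prop := a.preP ⊆ σ.T ∧ a.preN ⊆ σ.F

/-- The result of executing a non-sensing action `a` in an a-state `σ`. -/
def NAct.res (a : NAct V) (σ : St V) : St V :=
  ⟨σ.T \ a.del ∪ a.add, σ.F \ a.add ∪ a.del⟩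

/-- The transition function `Φ` for a non-sensing action (`none` plays the role of `⊥`). -/
def PhiN (a : NAct V) (σ : St V) : Set (Option (St V)) :=
  {x | (a.execIn σ ∧ x = some (a.res σ)) ∨ (¬ a.execIn σ ∧ x = none)}

/-- The possible results of executing a sensing action `a` in an a-state `σ`. -/
def sres (a : SAct V) (σ : St V) : Set (St V) :=
  {σ' | σ'.OK ∧ σ.T ⊆ σ'.T ∧ σ.F ⊆ σ'.F ∧
    (σ'.T \ σ.T) ∪ (σ'.F \ σ.F) = a.sens \ (σ.T ∪ σ.F)}

/-- The transition function `Φ` for a sensing action (`none` plays the role of `⊥`). -/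
def PhiS (a : SAct V) (σ : St V) : Set (Option (St V)) :=
  {x | (a.execIn σ ∧ ∃ σ' ∈ sres a σ, x = some σ') ∨ (¬ a.execIn σ ∧ x = none)}

/-! ## Regression for single actions -/

/-- Applicability of a non-sensing action `a` in a p-state `δ`. -/
def AppN (a : NAct V) (δ : St V) : Prop :=
  ((a.add ∩ δ.T).Nonempty ∨ (a.del ∩ δ.F).Nonempty) ∧
  Disjoint a.add δ.F ∧ Disjoint a.del δ.T ∧
  a.preP ∩ δ.F ⊆ a.del ∧ a.preN ∩ δ.T ⊆ a.add

/-- Regression of a non-sensing action over a p-state (`none` is `⊥`). -/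
noncomputable def RegressN (a : NAct V) (δ : St V) : Option (St V) :=
  if AppN a δ then some ⟨δ.T \ a.add ∪ a.preP, δ.F \ a.del ∪ a.preN⟩ else none

/-- `X` is a sensed set of the set `Δ` of (distinct) p-states with respect to the sensing
action `a`, i.e. `X` is a nonempty subset of `Sens_a` and `Δ` is proper with respect to `X`. -/
def SensedSet (a : SAct V) (Δ : Finset (St V)) (X : Finset V) : Prop :=
  X.Nonempty ∧ X ⊆ a.sens ∧
  (∀ δ ∈ Δ, a.sens ⊆ δ.T ∪ δ.F) ∧
  Δ.card = 2 ^ X.card ∧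
  (∀ P Q : Finset V, Disjoint P Q → P ∪ Q = X →
    ∃! δ, δ ∈ Δ ∧ δ.T ∩ X = P ∧ δ.F ∩ X = Q) ∧
  (∀ δ ∈ Δ, ∀ δ' ∈ Δ, δ ≠ δ' → δ.T \ X = δ'.T \ X ∧ δ.F \ X = δ'.F \ X)

/-- Strong applicability of a sensing action in a set of p-states. -/
def StrongApp (a : SAct V) (Δ : Finset (St V)) : Prop :=
  (∃ X, SensedSet a Δ X) ∧ ∀ δ ∈ Δ, Disjoint a.preP δ.F ∧ Disjoint a.preN δ.T

/-- Applicability of a sensing action in a set of p-states: some family of partial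
extensions of the members of `Δ` makes `a` strongly applicable, and `Sens_a` is known
in every member of `Δ`. -/
def AppS (a : SAct V) (Δ : Finset (St V)) : Prop :=
  (∃ e : St V → St V, (∀ δ ∈ Δ, pext δ (e δ)) ∧ Set.InjOn e ↑Δ ∧ StrongApp a (Δ.image e)) ∧
  (∀ δ ∈ Δ, a.sens ⊆ δ.T ∪ δ.F)

/-- `S_{a,Δ}`: the sensed set of a family of partial extensions of `Δ`
(well-defined by the "unique sensed set" lemma). -/
noncomputable def SaD (a : SAct V) (Δ : Finset (St V)) : Finset V :=
  if h : ∃ X, ∃ e : St V → St V, (∀ δ ∈ Δ, pext δ (e δ)) ∧ Set.InjOn e ↑Δ ∧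
      SensedSet a (Δ.image e) X
  then h.choose else ∅

/-- Regression of a sensing action over a set of p-states (`none` is `⊥`). -/
noncomputable def RegressS (a : SAct V) (Δ : Finset (St V)) : Option (St V) :=
  if AppS a Δ then
    some ⟨(Δ.sup St.T) \ SaD a Δ ∪ a.preP, (Δ.sup St.F) \ SaD a Δ ∪ a.preN⟩
  else none

/-! ## Formulas (conjunctions of fluent literals) -/

/-- A conjunction of fluent literals, given by its positive and negative fluents. -/
abbrev Form (V : Type*) := Finset V × Finset V

/-- A conjunction of literals is consistent if no fluent occurs both positively and
negatively. -/
def Consistent (φ : Form V) : Prop := Disjoint φ.1 φ.2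

/-- Two conjunctions of literals are mutually exclusive. -/
def MutEx (φ ψ : Form V) : Prop := ¬ Disjoint φ.1 ψ.2 ∨ ¬ Disjoint ψ.1 φ.2

/-- A conjunction of literals holds in an a-state. -/
def holds (φ : Form V) (σ : St V) : Prop := φ.1 ⊆ σ.T ∧ φ.2 ⊆ σ.F

/-- `BIN S`: all binary representations of the nonempty set of fluents `S`. -/
def BIN (S : Finset V) : Finset (Form V) :=
  S.powerset.image (fun P => (P, S \ P))

/-- The set of conjunctions `χ` spans over the set of fluents `S`. -/
def spans (χ : Finset (Form V)) (S : Finset V) : Prop :=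
  ∃ φ : Form V, Consistent φ ∧ φ ∉ χ ∧ Disjoint S (φ.1 ∪ φ.2) ∧
    χ = (BIN S).image (fun ψ => (φ.1 ∪ ψ.1, φ.2 ∪ ψ.2))

/-! ## Conditional plans -/

/-- Conditional plans. -/
inductive Plan (V : Type*) where
  | empty : Plan V
  | action : NAct V → Plan V
  | pcase : SAct V → List (Form V × Plan V) → Plan V
  | seq : Plan V → Plan V → Plan V

/-- Well-formedness of a conditional plan: in every case plan the guards are
consistent and pairwise mutually exclusive conjunctions of literals. -/
inductive Plan.WF : Plan V → Prop
  | empty : Plan.WF .empty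
  | action (a : NAct V) : Plan.WF (.action a)
  | pcase (a : SAct V) (bs : List (Form V × Plan V)) :
      (∀ b ∈ bs, Consistent b.1) →
      bs.Pairwise (fun b b' => MutEx b.1 b'.1) →
      (∀ b ∈ bs, Plan.WF b.2) → Plan.WF (.pcase a bs)
  | seq {c₁ c₂ : Plan V} : Plan.WF c₁ → Plan.WF c₂ → Plan.WF (.seq c₁ c₂)

/-- The graph of the extended transition function `Φ*`:
`PhiStarR c x y` means `y ∈ Φ*(c, x)` (where `none` is `⊥`). -/
inductive PhiStarR : Plan V → Option (St V) → Option (St V) → Prop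
  | bot (c : Plan V) : PhiStarR c none none
  | empty (σ : St V) : PhiStarR .empty (some σ) (some σ)
  | action (a : NAct V) (σ : St V) (x : Option (St V)) :
      x ∈ PhiN a σ → PhiStarR (.action a) (some σ) x
  | caseBot (a : SAct V) (bs : List (Form V × Plan V)) (σ : St V) :
      none ∈ PhiS a σ → PhiStarR (.pcase a bs) (some σ) none
  | caseHit (a : SAct V) (bs : List (Form V × Plan V)) (σ σ' : St V)
      (φ : Form V) (p : Plan V) (x : Option (St V)) :
      some σ' ∈ PhiS a σ → (φ, p) ∈ bs → holds φ σ' →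
      PhiStarR p (some σ') x → PhiStarR (.pcase a bs) (some σ) x
  | caseMiss (a : SAct V) (bs : List (Form V × Plan V)) (σ σ' : St V) :
      some σ' ∈ PhiS a σ → (∀ b ∈ bs, ¬ holds b.1 σ') →
      PhiStarR (.pcase a bs) (some σ) none
  | seq (c₁ c₂ : Plan V) (σ : St V) (y x : Option (St V)) :
      PhiStarR c₁ (some σ) y → PhiStarR c₂ y x → PhiStarR (.seq c₁ c₂) (some σ) x

/-- `R(cᵢ,δ)` from the definition of `Regress*` on case plans (the consistent case). -/
def Rform (φ : Form V) (st : St V) : St V := ⟨st.T ∪ φ.1, st.F ∪ φ.2⟩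

/-- The graph of the extended regression function `Regress*`:
`RegStarR c x y` means `Regress*(c, x) = y` (where `none` is `⊥`). -/
inductive RegStarR : Plan V → Option (St V) → Option (St V) → Prop
  | bot (c : Plan V) : RegStarR c none none
  | empty (δ : St V) : RegStarR .empty (some δ) (some δ)
  | action (a : NAct V) (δ : St V) : RegStarR (.action a) (some δ) (RegressN a δ)
  | caseBot (a : SAct V) (bs : List (Form V × Plan V)) (δ : St V)
      (b : Form V × Plan V) :
      b ∈ bs → RegStarR b.2 (some δ) none → RegStarR (.pcase a bs) (some δ) none
  | caseRBot (a : SAct V) (bs : List (Form V × Plan V)) (δ : St V)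
      (b : Form V × Plan V) (st : St V) :
      b ∈ bs → RegStarR b.2 (some δ) (some st) →
      ¬ (Disjoint b.1.1 st.F ∧ Disjoint b.1.2 st.T) →
      RegStarR (.pcase a bs) (some δ) none
  | caseGo (a : SAct V) (bs : List (Form V × Plan V)) (δ : St V)
      (r : Form V × Plan V → St V) :
      (∀ b ∈ bs, RegStarR b.2 (some δ) (some (r b))) →
      (∀ b ∈ bs, Disjoint b.1.1 (r b).F ∧ Disjoint b.1.2 (r b).T) →
      RegStarR (.pcase a bs) (some δ)
        (RegressS a ((bs.map (fun b => Rform b.1 (r b))).toFinset))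
  | seq (c₁ c₂ : Plan V) (δ : St V) (y x : Option (St V)) :
      RegStarR c₂ (some δ) y → RegStarR c₁ y x → RegStarR (.seq c₁ c₂) (some δ) x

/-! ## Subplans, redundancy, regressability -/

/-- One editing step producing a "smaller" plan: removing an instance of a
non-sensing action, removing a case plan or one of its branches, or replacing a
sensing action by a sub sensing action; possibly deep inside the plan. -/
inductive Edit : Plan V → Plan V → Prop
  | dropAct (a : NAct V) : Edit (.action a) .empty
  | dropCase (a : SAct V) (bs : List (Form V × Plan V)) : Edit (.pcase a bs) .empty
  | dropBranch (a : SAct V) (b : Form V × Plan V) (l₁ l₂ : List (Form V × Plan V)) :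
      Edit (.pcase a (l₁ ++ b :: l₂)) (.pcase a (l₁ ++ l₂))
  | subSense (a a' : SAct V) (bs : List (Form V × Plan V)) :
      a'.preP = a.preP → a'.preN = a.preN → a'.sens ⊂ a.sens →
      Edit (.pcase a bs) (.pcase a' bs)
  | inBranch (a : SAct V) (φ : Form V) (p p' : Plan V) (l₁ l₂ : List (Form V × Plan V)) :
      Edit p p' →
      Edit (.pcase a (l₁ ++ (φ, p) :: l₂)) (.pcase a (l₁ ++ (φ, p') :: l₂))
  | seqL {c₁ c₁' : Plan V} (c₂ : Plan V) : Edit c₁ c₁' → Edit (.seq c₁ c₂) (.seq c₁' c₂)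
  | seqR {c₂ c₂' : Plan V} (c₁ : Plan V) : Edit c₂ c₂' → Edit (.seq c₁ c₂) (.seq c₁ c₂')

/-- `c'` is a subplan of `c`. -/
def IsSubplan (c' c : Plan V) : Prop := Relation.TransGen Edit c c'

/-- `⊥ ∉ Φ*(c,σ)` and `Φ*(c,σ) ⊆ ext(δ)`. -/
def Achieves (c : Plan V) (σ δ : St V) : Prop :=
  ∀ x, PhiStarR c (some σ) x → ∃ σ' ∈ exts δ, x = some σ'

/-- `c` is redundant with respect to `(σ,δ)`. -/
def Redundant (c : Plan V) (σ δ : St V) : Prop :=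
  Achieves c σ δ ∧ ∃ c', IsSubplan c' c ∧ Achieves c' σ δ

/-- A case plan `a;case(φ₁→c₁,…,φₙ→cₙ)` is possibly regressable. -/
def PRCase (a : SAct V) (bs : List (Form V × Plan V)) : Prop :=
  (∃ S : Finset V, S.Nonempty ∧ S ⊆ a.sens ∧ spans (bs.map Prod.fst).toFinset S) ∧
  ∀ b ∈ bs, a.sens ⊆ b.1.1 ∪ b.1.2

/-- Every case plan occurring in `c` is possibly regressable. -/
inductive AllCasesPR : Plan V → Prop
  | empty : AllCasesPR .empty
  | action (a : NAct V) : AllCasesPR (.action a)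
  | pcase (a : SAct V) (bs : List (Form V × Plan V)) :
      PRCase a bs → (∀ b ∈ bs, AllCasesPR b.2) → AllCasesPR (.pcase a bs)
  | seq {c₁ c₂ : Plan V} : AllCasesPR c₁ → AllCasesPR c₂ → AllCasesPR (.seq c₁ c₂)

/-- `c` is regressable with respect to `(σ,δ)`. -/
def Regressable (c : Plan V) (σ δ : St V) : Prop :=
  AllCasesPR c ∧ Achieves c σ δ ∧ ¬ Redundant c σ δ

/-! ## Normalized plans -/

/-- Normalized conditional plans: a sequence of non-sensing actions followed by
either nothing or a case plan all of whose branches are normalized. -/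
inductive Normalized : Plan V → Prop
  | empty : Normalized .empty
  | single (a : NAct V) : Normalized (.action a)
  | pcase (a : SAct V) (bs : List (Form V × Plan V)) :
      (∀ b ∈ bs, Normalized b.2) → Normalized (.pcase a bs)
  | cons (a : NAct V) {c : Plan V} : Normalized c → Normalized (.seq (.action a) c)

/-- `normSeq c k` normalizes the plan `c ; k`, assuming `k` is already normalized. -/
def normSeq : Plan V → Plan V → Plan V
  | .empty, k => k
  | .action a, k => .seq (.action a) k
  | .pcase a bs, k => .pcase a (bs.attach.map (fun b => (b.1.1, normSeq b.1.2 k)))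
  | .seq c₁ c₂, k => normSeq c₁ (normSeq c₂ k)
termination_by c _ => sizeOf c
decreasing_by
  all_goals simp_wf
  all_goals first
    | omega
    | (have h := List.sizeOf_lt_of_mem b.2
       obtain ⟨⟨f, p⟩, hb⟩ := b
       simp at *
       omega)

/-- `normalized(c)`. -/
def normalizePlan (c : Plan V) : Plan V := normSeq c .empty

/-! ## Sequences of non-sensing actions -/

/-- The conditional plan `a₁;…;aₙ;k` determined by a list of non-sensing actions. -/
def seqP : List (NAct V) → Plan V → Plan V
  | [], k => k
  | a :: t, k => .seq (.action a) (seqP t k)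

instance (a : NAct V) (σ : St V) : Decidable (a.execIn σ) :=
  inferInstanceAs (Decidable (a.preP ⊆ σ.T ∧ a.preN ⊆ σ.F))

/-- `Φ*` specialized to a sequence of non-sensing actions, as a function
(`none` is `⊥`). -/
def runSeq : List (NAct V) → St V → Option (St V)
  | [], σ => some σ
  | a :: t, σ => if a.execIn σ then runSeq t (a.res σ) else none

/-- `Regress*` specialized to a sequence of non-sensing actions, as a function
(`none` is `⊥`). -/
noncomputable def regSeq : List (NAct V) → St V → Option (St V)
  | [], δ => some δ
  | a :: t, δ => match regSeq t δ with
      | none => none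
      | some δ' => RegressN a δ'

/-- For a sequence of non-sensing actions: `⊥ ∉ Φ*(l,σ)` and `Φ*(l,σ) ⊆ ext(δ)`. -/
def SeqAchieves (l : List (NAct V)) (σ δ : St V) : Prop :=
  ∃ σ', runSeq l σ = some σ' ∧ σ' ∈ exts δ

/-- Redundancy of a sequence of non-sensing actions with respect to `(σ,δ)`
(a subplan of a sequence is a proper sublist of it). -/
def SeqRedundant (l : List (NAct V)) (σ δ : St V) : Prop :=
  SeqAchieves l σ δ ∧ ∃ l', List.Sublist l' l ∧ l' ≠ l ∧ SeqAchieves l' σ δ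

/-- Regressability of a sequence of non-sensing actions with respect to `(σ,δ)`. -/
def SeqRegressable (l : List (NAct V)) (σ δ : St V) : Prop :=
  SeqAchieves l σ δ ∧ ¬ SeqRedundant l σ δ

/-! ## The regression search algorithm -/

/-- The sets of plan-state pairs reachable by the algorithm `Solve(P)` from the
initial set `{⟨[], δ_G⟩}` using steps 4.1 (non-sensing regression) and 4.2
(sensing regression). -/
inductive Reach (δG : St V) : Set (Plan V × St V) → Prop
  | init : Reach δG {(Plan.empty, δG)}
  | step1 {N : Set (Plan V × St V)} (c : Plan V) (δ : St V) (a : NAct V) (δ' : St V) :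
      Reach δG N → (c, δ) ∈ N → RegressN a δ = some δ' →
      (∀ p ∈ N, p.2 ≠ δ') →
      Reach δG (insert (Plan.seq (.action a) c, δ') N)
  | step2 {N : Set (Plan V × St V)} (a : SAct V) (bs : List (Form V × Plan V))
      (ds : Form V × Plan V → St V) (S : Finset V) (δ' : St V) :
      Reach δG N →
      (∀ b ∈ bs, (b.2, ds b) ∈ N) →
      S.Nonempty → S ⊆ a.sens → spans (bs.map Prod.fst).toFinset S →
      (∀ b ∈ bs, (Rform b.1 (ds b)).OK) →
      RegressS a ((bs.map (fun b => Rform b.1 (ds b))).toFinset) = some δ' →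
      (∀ p ∈ N, p.2 ≠ δ') →
      Reach δG (insert (Plan.pcase a bs, δ') N)

/-- `N` is saturated: no step of type 4.1 or 4.2 can produce a p-state not
already occurring in `N`. -/
def Saturated (N : Set (Plan V × St V)) : Prop :=
  (∀ (c : Plan V) (δ : St V) (a : NAct V) (δ' : St V),
      (c, δ) ∈ N → RegressN a δ = some δ' → ∃ p ∈ N, p.2 = δ') ∧
  (∀ (a : SAct V) (bs : List (Form V × Plan V)) (ds : Form V × Plan V → St V)
      (S : Finset V) (δ' : St V),
      (∀ b ∈ bs, (b.2, ds b) ∈ N) →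
      S.Nonempty → S ⊆ a.sens → spans (bs.map Prod.fst).toFinset S →
      (∀ b ∈ bs, (Rform b.1 (ds b)).OK) →
      RegressS a ((bs.map (fun b => Rform b.1 (ds b))).toFinset) = some δ' →
      ∃ p ∈ N, p.2 = δ')

/-!
Induct on the normalized plan. For a leading non-sensing action `a`, non-redundancy forbids
dropping `a`, so `σ` is not yet in the extension of what the rest of the plan regresses to (by
soundness of regression the rest alone would otherwise work from `σ`); together with
executability of `a` this is exactly applicability of `a`. For a case plan, non-redundancy makes
every branch live and itself regressable, so by induction branch `i` regresses to a p-state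
extended by its outcome `ωᵢ`. Joining each regressed p-state with `σ` gives back `ωᵢ`, and the
outcomes of sensing form a proper family with respect to the sensed fluents unknown in `σ`; this
witnesses applicability. Every sensed set of the regressed family contains all unknown fluents,
so the regressed p-state keeps only fluents whose values `σ` already has.
-/

omit [DecidableEq V] in
theorem St.ext {s t : St V} (hT : s.T = t.T) (hF : s.F = t.F) : s = t := by
  cases s; cases t; simp_all

def St.union (s t : St V) : St V := ⟨s.T ∪ t.T, s.F ∪ t.F⟩

theorem pext_union_right (σ δ : St V) : pext δ (σ.union δ) :=
  ⟨Finset.subset_union_right, Finset.subset_union_right⟩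

omit [DecidableEq V] in
theorem mem_exts_of_pext {σ ω δ : St V} (hσ : σ ∈ exts δ) (h : pext σ ω) (hω : ω.OK) :
    ω ∈ exts δ :=
  ⟨hω, hσ.2.1.trans h.1, hσ.2.2.trans h.2⟩

theorem T_inter_eq_of_pext {δ δ' : St V} {S : Finset V} (h : pext δ δ')
    (hS : S ⊆ δ.T ∪ δ.F) (hd : Disjoint (δ'.T ∩ S) δ'.F) : δ'.T ∩ S = δ.T ∩ S := by
  ext f
  simp only [Finset.mem_inter]
  refine ⟨fun ⟨hf, hfS⟩ => ⟨?_, hfS⟩, fun ⟨hf, hfS⟩ => ⟨h.1 hf, hfS⟩⟩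
  rcases Finset.mem_union.1 (hS hfS) with h' | h'
  · exact h'
  · exact absurd (h.2 h') (Finset.disjoint_left.1 hd (Finset.mem_inter.2 ⟨hf, hfS⟩))

theorem NAct.res_OK {a : NAct V} {σ : St V} (hσ : σ.OK) : (a.res σ).OK := by
  have := a.hdisj
  simp only [St.OK, NAct.res, Finset.disjoint_left, Finset.mem_union, Finset.mem_sdiff] at *
  grind

@[simp] theorem mem_PhiN {a : NAct V} {σ : St V} {x : Option (St V)} :
    x ∈ PhiN a σ ↔ x = if a.execIn σ then some (a.res σ) else none := by
  by_cases h : a.execIn σ <;> simp [PhiN, h]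

@[simp] theorem some_mem_PhiS {a : SAct V} {σ ω : St V} :
    some ω ∈ PhiS a σ ↔ a.execIn σ ∧ ω ∈ sres a σ := by
  simp [PhiS]

@[simp] theorem none_mem_PhiS {a : SAct V} {σ : St V} : none ∈ PhiS a σ ↔ ¬ a.execIn σ := by
  simp [PhiS]

@[simp] theorem phiStarR_empty_iff {σ : St V} {x : Option (St V)} :
    PhiStarR .empty (some σ) x ↔ x = some σ :=
  ⟨fun h => by cases h; rfl, fun h => h ▸ .empty σ⟩

@[simp] theorem phiStarR_action_iff {a : NAct V} {σ : St V} {x : Option (St V)} :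
    PhiStarR (.action a) (some σ) x ↔ x ∈ PhiN a σ :=
  ⟨fun h => by cases h; assumption, .action a σ x⟩

theorem achieves_empty_iff {σ δ : St V} : Achieves .empty σ δ ↔ σ ∈ exts δ := by
  simp [Achieves]

theorem achieves_action_iff {a : NAct V} {σ δ : St V} :
    Achieves (.action a) σ δ ↔ a.execIn σ ∧ a.res σ ∈ exts δ := by
  by_cases he : a.execIn σ <;> simp [Achieves, he]

theorem achieves_seq_iff {c₁ c₂ : Plan V} {σ δ : St V} :
    Achieves (.seq c₁ c₂) σ δ ↔
      ∀ y, PhiStarR c₁ (some σ) y → ∃ σ₁, y = some σ₁ ∧ Achieves c₂ σ₁ δ := by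
  constructor
  · intro h y hy
    cases y with
    | none => obtain ⟨_, _, h'⟩ := h none (.seq _ _ _ _ _ hy (.bot c₂)); cases h'
    | some σ₁ => exact ⟨σ₁, rfl, fun x hx => h x (.seq _ _ _ _ _ hy hx)⟩
  · intro h x hx
    cases hx with
    | seq _ _ _ y _ h₁ h₂ =>
      obtain ⟨σ₁, rfl, h'⟩ := h y h₁
      exact h' x h₂

theorem achieves_action_seq_iff {a : NAct V} {c : Plan V} {σ δ : St V} :
    Achieves (.seq (.action a) c) σ δ ↔ a.execIn σ ∧ Achieves c (a.res σ) δ := by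
  by_cases he : a.execIn σ <;> simp [achieves_seq_iff, he]

theorem achieves_empty_seq_iff {c : Plan V} {σ δ : St V} :
    Achieves (.seq .empty c) σ δ ↔ Achieves c σ δ := by
  simp [achieves_seq_iff]

theorem Achieves.seq {c₁ c₂ : Plan V} {σ δ₁ δ : St V} (h₁ : Achieves c₁ σ δ₁)
    (h₂ : ∀ σ₁ ∈ exts δ₁, Achieves c₂ σ₁ δ) : Achieves (.seq c₁ c₂) σ δ :=
  achieves_seq_iff.2 fun y hy =>
    let ⟨σ₁, hσ₁, hy'⟩ := h₁ y hy
    ⟨σ₁, hy', h₂ σ₁ hσ₁⟩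

theorem achieves_pcase_iff {a : SAct V} {bs : List (Form V × Plan V)} {σ δ : St V} :
    Achieves (.pcase a bs) σ δ ↔ a.execIn σ ∧ ∀ ω ∈ sres a σ,
      (∃ b ∈ bs, holds b.1 ω) ∧ ∀ b ∈ bs, holds b.1 ω → Achieves b.2 ω δ := by
  constructor
  · intro h
    have hexec : a.execIn σ := by
      by_contra he
      obtain ⟨_, _, h'⟩ := h none (.caseBot a bs σ (none_mem_PhiS.2 he))
      cases h'
    refine ⟨hexec, fun ω hω => ⟨?_, fun b hb hh x hx => ?_⟩⟩
    · by_contra! hmiss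
      obtain ⟨_, _, h'⟩ := h none (.caseMiss a bs σ ω (some_mem_PhiS.2 ⟨hexec, hω⟩) hmiss)
      cases h'
    · exact h x (.caseHit a bs σ ω b.1 b.2 x (some_mem_PhiS.2 ⟨hexec, hω⟩) hb hh hx)
  · rintro ⟨hexec, h⟩ x hx
    cases hx with
    | caseBot _ _ _ hbot => exact absurd hexec (none_mem_PhiS.1 hbot)
    | caseHit _ _ _ ω φ p _ hω hb hh hx =>
      exact (h ω (some_mem_PhiS.1 hω).2).2 (φ, p) hb hh x hx
    | caseMiss _ _ _ ω hω hmiss =>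
      obtain ⟨b, hb, hh⟩ := (h ω (some_mem_PhiS.1 hω).2).1
      exact absurd hh (hmiss b hb)

theorem sdiff_subset_of_res_mem_exts {a : NAct V} {σ δ : St V} (hres : a.res σ ∈ exts δ) :
    δ.T \ a.add ⊆ σ.T ∧ δ.F \ a.del ⊆ σ.F := by
  obtain ⟨-, hT, hF⟩ := hres
  simp only [NAct.res, Finset.subset_iff, Finset.mem_sdiff, Finset.mem_union] at hT hF ⊢
  grind

theorem appN_of_res_mem_exts {a : NAct V} {σ δ : St V} (hσ : σ.OK) (he : a.execIn σ)
    (hres : a.res σ ∈ exts δ) (hne : σ ∉ exts δ) : AppN a δ := by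
  have hsub := sdiff_subset_of_res_mem_exts hres
  obtain ⟨hok, hT, hF⟩ := hres
  have hdisj := a.hdisj
  simp only [exts, St.OK, NAct.res, NAct.execIn, Set.mem_ofPred_eq] at hσ hok hT hF he hne hsub
  simp only [AppN, Finset.subset_iff, Finset.disjoint_left, Finset.Nonempty, Finset.mem_sdiff,
    Finset.mem_union, Finset.mem_inter] at *
  grind

theorem exists_regressN_eq {a : NAct V} {σ δ : St V} (hσ : σ.OK) (he : a.execIn σ)
    (hres : a.res σ ∈ exts δ) (hne : σ ∉ exts δ) :
    ∃ δ', RegressN a δ = some δ' ∧ σ ∈ exts δ' :=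
  have hsub := sdiff_subset_of_res_mem_exts hres
  ⟨_, if_pos (appN_of_res_mem_exts hσ he hres hne), hσ,
    Finset.union_subset hsub.1 he.1, Finset.union_subset hsub.2 he.2⟩

theorem execIn_and_res_mem_exts_of_regressN_eq {a : NAct V} {δ δ' σ : St V}
    (h : RegressN a δ = some δ') (hσ : σ ∈ exts δ') : a.execIn σ ∧ a.res σ ∈ exts δ := by
  unfold RegressN at h
  split_ifs at h with happ
  cases h
  obtain ⟨hok, hT, hF⟩ := hσ
  obtain ⟨-, hadd, hdel, -, -⟩ := happ
  refine ⟨⟨Finset.subset_union_right.trans hT, Finset.subset_union_right.trans hF⟩,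
    NAct.res_OK hok, ?_, ?_⟩ <;>
  simp only [NAct.res, Finset.subset_iff, Finset.disjoint_left, Finset.mem_sdiff,
    Finset.mem_union] at * <;> grind

/-! ## Outcomes of a sensing action -/

theorem sens_subset_of_mem_sres {a : SAct V} {σ ω : St V} (h : ω ∈ sres a σ) :
    a.sens ⊆ ω.T ∪ ω.F := by
  obtain ⟨-, hT, hF, heq⟩ := h
  intro f hf
  have := Finset.ext_iff.1 heq f
  simp only [Finset.mem_union, Finset.mem_sdiff] at this ⊢
  grind

theorem union_eq_of_mem_sres {a : SAct V} {σ ω δ : St V} (hω : ω ∈ sres a σ) (hδ : pext δ ω)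
    (hk : a.sens ⊆ δ.T ∪ δ.F) : σ.union δ = ω := by
  obtain ⟨hok, hT, hF, heq⟩ := hω
  obtain ⟨hδT, hδF⟩ := hδ
  rw [St.OK, Finset.disjoint_left] at hok
  apply St.ext <;> ext f <;> have := Finset.ext_iff.1 heq f <;>
    simp only [St.union, Finset.mem_union, Finset.mem_sdiff] at this ⊢ <;> grind

theorem sres_eq_of_holds {a : SAct V} {σ ω₁ ω₂ : St V} {φ : Form V}
    (h₁ : ω₁ ∈ sres a σ) (h₂ : ω₂ ∈ sres a σ) (hφ : a.sens ⊆ φ.1 ∪ φ.2)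
    (hh₁ : holds φ ω₁) (hh₂ : holds φ ω₂) : ω₁ = ω₂ :=
  (union_eq_of_mem_sres (δ := ⟨φ.1, φ.2⟩) h₁ hh₁ hφ).symm.trans (union_eq_of_mem_sres h₂ hh₂ hφ)

def SAct.unknown (a : SAct V) (σ : St V) : Finset V := a.sens \ (σ.T ∪ σ.F)

def SAct.outcome (a : SAct V) (σ : St V) (P : Finset V) : St V :=
  ⟨σ.T ∪ P, σ.F ∪ (a.unknown σ \ P)⟩

def SAct.outcomes (a : SAct V) (σ : St V) : Finset (St V) :=
  (a.unknown σ).powerset.image (a.outcome σ)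

namespace SAct

variable {a : SAct V} {σ : St V} {P : Finset V}

theorem outcome_mem_sres (hσ : σ.OK) (hP : P ⊆ a.unknown σ) : a.outcome σ P ∈ sres a σ := by
  rw [St.OK, Finset.disjoint_left] at hσ
  rw [Finset.subset_iff] at hP
  refine ⟨?_, Finset.subset_union_left, Finset.subset_union_left, ?_⟩
  · rw [St.OK, Finset.disjoint_left]
    simp only [outcome, unknown, Finset.mem_union, Finset.mem_sdiff] at hP ⊢
    grind
  · ext f
    simp only [outcome, unknown, Finset.mem_union, Finset.mem_sdiff] at hP ⊢
    grind

theorem outcome_T_inter_unknown (hP : P ⊆ a.unknown σ) :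
    (a.outcome σ P).T ∩ a.unknown σ = P := by
  rw [Finset.subset_iff] at hP
  ext f
  simp only [outcome, unknown, Finset.mem_union, Finset.mem_sdiff, Finset.mem_inter] at hP ⊢
  grind

theorem outcome_F_inter_unknown :
    (a.outcome σ P).F ∩ a.unknown σ = a.unknown σ \ P := by
  ext f
  simp only [outcome, unknown, Finset.mem_union, Finset.mem_sdiff, Finset.mem_inter]
  grind

theorem outcome_T_sdiff_unknown (hP : P ⊆ a.unknown σ) :
    (a.outcome σ P).T \ a.unknown σ = σ.T := by
  rw [Finset.subset_iff] at hP
  ext f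
  simp only [outcome, unknown, Finset.mem_union, Finset.mem_sdiff] at hP ⊢
  grind

theorem outcome_F_sdiff_unknown : (a.outcome σ P).F \ a.unknown σ = σ.F := by
  ext f
  simp only [outcome, unknown, Finset.mem_union, Finset.mem_sdiff]
  grind

theorem sdiff_subset_unknown_of_mem_sres {ω : St V} (hω : ω ∈ sres a σ) :
    ω.T \ σ.T ⊆ a.unknown σ ∧ ω.F \ σ.F ⊆ a.unknown σ := by
  rw [unknown, ← hω.2.2.2]
  exact ⟨Finset.subset_union_left, Finset.subset_union_right⟩

theorem mem_outcomes (hσ : σ.OK) {ω : St V} : ω ∈ a.outcomes σ ↔ ω ∈ sres a σ := by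
  refine ⟨?_, fun hω => ?_⟩
  · simp only [outcomes, Finset.mem_image, Finset.mem_powerset]
    rintro ⟨P, hP, rfl⟩
    exact outcome_mem_sres hσ hP
  · have hP : ω.T ∩ a.unknown σ ⊆ a.unknown σ := Finset.inter_subset_right
    refine Finset.mem_image.2 ⟨_, Finset.mem_powerset.2 hP, ?_⟩
    obtain ⟨hok, hT, hF, heq⟩ := hω
    rw [St.OK, Finset.disjoint_left] at hok
    rw [Finset.subset_iff] at hT hF
    apply St.ext <;> ext f <;> have := Finset.ext_iff.1 heq f <;>
      simp only [outcome, unknown, Finset.mem_union, Finset.mem_sdiff, Finset.mem_inter]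
        at this ⊢ <;> grind

theorem sensedSet_outcomes (hσ : σ.OK) (hU : (a.unknown σ).Nonempty) :
    SensedSet a (a.outcomes σ) (a.unknown σ) := by
  have hmem : ∀ m ∈ a.outcomes σ, ∃ P ⊆ a.unknown σ, a.outcome σ P = m := by
    simp [outcomes]
  refine ⟨hU, Finset.sdiff_subset, fun m hm => sens_subset_of_mem_sres ((mem_outcomes hσ).1 hm),
    ?_, fun P Q hPQ hU' => ?_, fun m hm m' hm' _ => ?_⟩
  · rw [outcomes, Finset.card_image_of_injOn, Finset.card_powerset]
    intro P hP P' hP' h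
    rw [← outcome_T_inter_unknown (Finset.mem_powerset.1 hP),
      ← outcome_T_inter_unknown (Finset.mem_powerset.1 hP'), h]
  · have hP : P ⊆ a.unknown σ := hU' ▸ Finset.subset_union_left
    have hQ : a.unknown σ \ P = Q := by
      rw [← hU', Finset.union_sdiff_left, Finset.sdiff_eq_self_of_disjoint hPQ.symm]
    refine ⟨a.outcome σ P, ⟨Finset.mem_image_of_mem _ (Finset.mem_powerset.2 hP),
      outcome_T_inter_unknown hP, hQ ▸ outcome_F_inter_unknown⟩, ?_⟩
    rintro m ⟨hm, hmT, -⟩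
    obtain ⟨P', hP', rfl⟩ := hmem m hm
    rw [outcome_T_inter_unknown hP'] at hmT
    rw [hmT]
  · obtain ⟨P, hP, rfl⟩ := hmem m hm
    obtain ⟨P', hP', rfl⟩ := hmem m' hm'
    simp only [outcome_T_sdiff_unknown hP, outcome_T_sdiff_unknown hP', outcome_F_sdiff_unknown,
      and_self]

theorem strongApp_outcomes (hσ : σ.OK) (hexec : a.execIn σ) (hU : (a.unknown σ).Nonempty) :
    StrongApp a (a.outcomes σ) := by
  refine ⟨⟨_, sensedSet_outcomes hσ hU⟩, fun ω hω => ?_⟩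
  obtain ⟨hok, hT, hF, -⟩ := (mem_outcomes hσ).1 hω
  exact ⟨hok.mono_left (hexec.1.trans hT), hok.symm.mono_left (hexec.2.trans hF)⟩

end SAct

/-! ## Sensed sets -/

namespace SensedSet

variable {a : SAct V} {Δ' : Finset (St V)} {X : Finset V}

theorem injOn_T_inter (h : SensedSet a Δ' X) : Set.InjOn (fun m : St V => m.T ∩ X) Δ' := by
  obtain ⟨-, -, -, hcard, hpart, -⟩ := h
  refine Finset.injOn_of_surjOn_of_card_le (fun m : St V => m.T ∩ X) (t := X.powerset)
    (fun _ _ => Finset.mem_powerset.2 Finset.inter_subset_right) (fun P hP => ?_)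
    (by rw [hcard, Finset.card_powerset])
  have hPX := Finset.mem_powerset.1 hP
  obtain ⟨m, ⟨hm, hmT, -⟩, -⟩ :=
    hpart P (X \ P) Finset.disjoint_sdiff (Finset.union_sdiff_of_subset hPX)
  exact ⟨m, hm, hmT⟩

theorem F_inter {m : St V} (h : SensedSet a Δ' X) (hm : m ∈ Δ') : m.F ∩ X = X \ m.T := by
  obtain ⟨m₀, ⟨hm₀, hT, hF⟩, -⟩ := h.2.2.2.2.1 (m.T ∩ X) (X \ m.T)
    (by grind [Finset.disjoint_left]) (by ext; simp; tauto)
  rwa [h.injOn_T_inter hm₀ hm hT] at hF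

theorem exists_notMem_T {f : V} (h : SensedSet a Δ' X) (hf : f ∈ X) : ∃ m ∈ Δ', f ∉ m.T := by
  obtain ⟨m, ⟨hm, hT, -⟩, -⟩ := h.2.2.2.2.1 ∅ X (Finset.disjoint_empty_left X) X.empty_union
  exact ⟨m, hm, fun hfT => Finset.notMem_empty f (hT ▸ Finset.mem_inter.2 ⟨hfT, hf⟩)⟩

theorem exists_notMem_F {f : V} (h : SensedSet a Δ' X) (hf : f ∈ X) : ∃ m ∈ Δ', f ∉ m.F := by
  obtain ⟨m, ⟨hm, -, hF⟩, -⟩ := h.2.2.2.2.1 X ∅ (Finset.disjoint_empty_right X) X.union_empty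
  exact ⟨m, hm, fun hfF => Finset.notMem_empty f (hF ▸ Finset.mem_inter.2 ⟨hfF, hf⟩)⟩

end SensedSet

namespace AppS

variable {a : SAct V} {Δ : Finset (St V)}

theorem exists_sensedSet_SaD (h : AppS a Δ) :
    ∃ e : St V → St V, (∀ δ ∈ Δ, pext δ (e δ)) ∧ Set.InjOn e ↑Δ ∧
      SensedSet a (Δ.image e) (SaD a Δ) := by
  obtain ⟨⟨e, he, hinj, ⟨⟨X, hX⟩, -⟩⟩, -⟩ := h
  have hex : ∃ X, ∃ e : St V → St V, (∀ δ ∈ Δ, pext δ (e δ)) ∧ Set.InjOn e ↑Δ ∧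
      SensedSet a (Δ.image e) X := ⟨X, e, he, hinj, hX⟩
  rw [SaD, dif_pos hex]
  exact hex.choose_spec

theorem SaD_subset_sens (h : AppS a Δ) : SaD a Δ ⊆ a.sens := by
  obtain ⟨_, -, -, hX⟩ := h.exists_sensedSet_SaD
  exact hX.2.1

theorem notMem_SaD_of_forall_mem_T {f : V} (h : AppS a Δ) (hT : ∀ δ ∈ Δ, f ∈ δ.T) :
    f ∉ SaD a Δ := by
  obtain ⟨e, he, -, hX⟩ := h.exists_sensedSet_SaD
  intro hf
  obtain ⟨_, hm, hfm⟩ := hX.exists_notMem_T hf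
  obtain ⟨δ, hδ, rfl⟩ := Finset.mem_image.1 hm
  exact hfm ((he δ hδ).1 (hT δ hδ))

theorem notMem_SaD_of_forall_mem_F {f : V} (h : AppS a Δ) (hF : ∀ δ ∈ Δ, f ∈ δ.F) :
    f ∉ SaD a Δ := by
  obtain ⟨e, he, -, hX⟩ := h.exists_sensedSet_SaD
  intro hf
  obtain ⟨_, hm, hfm⟩ := hX.exists_notMem_F hf
  obtain ⟨δ, hδ, rfl⟩ := Finset.mem_image.1 hm
  exact hfm ((he δ hδ).2 (hF δ hδ))

theorem eq_of_T_inter_SaD_eq {δ₁ δ₂ : St V} (h : AppS a Δ) (h₁ : δ₁ ∈ Δ) (h₂ : δ₂ ∈ Δ)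
    (hT : δ₁.T ∩ SaD a Δ = δ₂.T ∩ SaD a Δ) : δ₁ = δ₂ := by
  obtain ⟨e, he, hinj, hX⟩ := h.exists_sensedSet_SaD
  have key : ∀ δ ∈ Δ, (e δ).T ∩ SaD a Δ = δ.T ∩ SaD a Δ := fun δ hδ =>
    T_inter_eq_of_pext (he δ hδ) (h.SaD_subset_sens.trans (h.2 δ hδ)) <| by
      rw [Finset.disjoint_left]
      intro f hf hfF
      have := hX.F_inter (Finset.mem_image_of_mem e hδ) ▸
        Finset.mem_inter.2 ⟨hfF, (Finset.mem_inter.1 hf).2⟩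
      exact (Finset.mem_sdiff.1 this).2 (Finset.mem_inter.1 hf).1
  exact hinj h₁ h₂ <| hX.injOn_T_inter (Finset.mem_image_of_mem e h₁)
    (Finset.mem_image_of_mem e h₂) (by simp only [key δ₁ h₁, key δ₂ h₂, hT])

end AppS

theorem regressS_eq_some_iff {a : SAct V} {Δ : Finset (St V)} {δ' : St V} :
    RegressS a Δ = some δ' ↔ AppS a Δ ∧
      ⟨Δ.sup St.T \ SaD a Δ ∪ a.preP, Δ.sup St.F \ SaD a Δ ∪ a.preN⟩ = δ' := by
  unfold RegressS
  split_ifs with h <;> simp [h]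

theorem subset_regressS_of_mem {a : SAct V} {Δ : Finset (St V)} {δ δ' : St V}
    (hreg : RegressS a Δ = some δ') (hδ : δ ∈ Δ) :
    δ.T \ SaD a Δ ⊆ δ'.T ∧ δ.F \ SaD a Δ ⊆ δ'.F := by
  obtain ⟨-, rfl⟩ := regressS_eq_some_iff.1 hreg
  exact ⟨(Finset.sdiff_subset_sdiff (Finset.le_sup hδ) le_rfl).trans Finset.subset_union_left,
    (Finset.sdiff_subset_sdiff (Finset.le_sup hδ) le_rfl).trans Finset.subset_union_left⟩

theorem execIn_of_regressS {a : SAct V} {Δ : Finset (St V)} {δ' σ : St V}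
    (hreg : RegressS a Δ = some δ') (hσ : σ ∈ exts δ') : a.execIn σ := by
  obtain ⟨-, rfl⟩ := regressS_eq_some_iff.1 hreg
  exact ⟨Finset.subset_union_right.trans hσ.2.1, Finset.subset_union_right.trans hσ.2.2⟩

theorem spans.exists_base {χ : Finset (Form V)} {S : Finset V} (h : spans χ S) :
    ∃ φ : Form V, ∀ ψ, ψ ∈ χ ↔ ∃ P ⊆ S, ψ = (φ.1 ∪ P, φ.2 ∪ (S \ P)) := by
  obtain ⟨φ, -, -, -, rfl⟩ := h
  exact ⟨φ, fun ψ => by simp [BIN, eq_comm]⟩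

/-! ## Soundness of regression -/

theorem mem_exts_of_regressS {a : SAct V} {Δ : Finset (St V)} {δ' ω st : St V} {φ : Form V}
    (hreg : RegressS a Δ = some δ') (hmem : Rform φ st ∈ Δ) (hsens : a.sens ⊆ φ.1 ∪ φ.2)
    (hdisj : Disjoint φ.1 st.F ∧ Disjoint φ.2 st.T) (hω : ω ∈ exts δ') (hh : holds φ ω) :
    ω ∈ exts st := by
  have happ := (regressS_eq_some_iff.1 hreg).1
  have hkeep := subset_regressS_of_mem hreg hmem
  refine ⟨hω.1, fun f hf => ?_, fun f hf => ?_⟩ <;> by_cases hfX : f ∈ SaD a Δ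
  · rcases Finset.mem_union.1 (hsens (happ.SaD_subset_sens hfX)) with h | h
    · exact hh.1 h
    · exact absurd hf (Finset.disjoint_left.1 hdisj.2 h)
  · exact hω.2.1 (hkeep.1 (Finset.mem_sdiff.2 ⟨Finset.mem_union_left _ hf, hfX⟩))
  · rcases Finset.mem_union.1 (hsens (happ.SaD_subset_sens hfX)) with h | h
    · exact absurd hf (Finset.disjoint_left.1 hdisj.1 h)
    · exact hh.2 h
  · exact hω.2.2 (hkeep.2 (Finset.mem_sdiff.2 ⟨Finset.mem_union_left _ hf, hfX⟩))

theorem achieves_pcase_of_regressS {a : SAct V} {bs : List (Form V × Plan V)}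
    {r : Form V × Plan V → St V} {δ δ' σ : St V} (hpr : PRCase a bs)
    (hdisj : ∀ b ∈ bs, Disjoint b.1.1 (r b).F ∧ Disjoint b.1.2 (r b).T)
    (hreg : RegressS a ((bs.map fun b => Rform b.1 (r b)).toFinset) = some δ')
    (hσ : σ ∈ exts δ') (ih : ∀ b ∈ bs, ∀ ω ∈ exts (r b), Achieves b.2 ω δ) :
    Achieves (.pcase a bs) σ δ := by
  set Δ := (bs.map fun b => Rform b.1 (r b)).toFinset
  have happ := (regressS_eq_some_iff.1 hreg).1
  have hmemΔ : ∀ b ∈ bs, Rform b.1 (r b) ∈ Δ := fun b hb =>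
    List.mem_toFinset.2 (List.mem_map.2 ⟨b, hb, rfl⟩)
  obtain ⟨⟨S, -, hSsens, hspan⟩, hsens⟩ := hpr
  obtain ⟨φ, hφχ⟩ := hspan.exists_base
  have hφΔ : ∀ m ∈ Δ, φ.1 ⊆ m.T ∧ φ.2 ⊆ m.F := by
    simp only [Δ, List.mem_toFinset, List.mem_map]
    rintro _ ⟨b, hb, rfl⟩
    obtain ⟨P, -, hP⟩ := (hφχ b.1).1 (by simpa using ⟨b.2, hb⟩)
    rw [Rform, hP]
    exact ⟨Finset.subset_union_left.trans Finset.subset_union_right,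
      Finset.subset_union_left.trans Finset.subset_union_right⟩
  obtain ⟨b₀, hb₀, -⟩ : ∃ b ∈ bs, b.1 = (φ.1 ∪ ∅, φ.2 ∪ (S \ ∅)) := by
    simpa using (hφχ _).2 ⟨∅, Finset.empty_subset S, rfl⟩
  -- the fluents common to all guards are common to all of `Δ`, hence not sensed
  have hkeep := subset_regressS_of_mem hreg (hmemΔ b₀ hb₀)
  have hφ : holds φ δ' :=
    ⟨fun f hf => hkeep.1 (Finset.mem_sdiff.2 ⟨(hφΔ _ (hmemΔ b₀ hb₀)).1 hf,
      happ.notMem_SaD_of_forall_mem_T fun m hm => (hφΔ m hm).1 hf⟩),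
    fun f hf => hkeep.2 (Finset.mem_sdiff.2 ⟨(hφΔ _ (hmemΔ b₀ hb₀)).2 hf,
      happ.notMem_SaD_of_forall_mem_F fun m hm => (hφΔ m hm).2 hf⟩)⟩
  refine achieves_pcase_iff.2 ⟨execIn_of_regressS hreg hσ, fun ω hω =>
    ⟨?_, fun b hb hh => ih b hb ω ?_⟩⟩
  · obtain ⟨b, hb, hbeq⟩ : ∃ b ∈ bs, b.1 = (φ.1 ∪ (S ∩ ω.T), φ.2 ∪ (S \ (S ∩ ω.T))) := by
      simpa using (hφχ _).2 ⟨_, Finset.inter_subset_left, rfl⟩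
    refine ⟨b, hb, hbeq ▸ ⟨Finset.union_subset (hφ.1.trans (hσ.2.1.trans hω.2.1))
      Finset.inter_subset_right, Finset.union_subset (hφ.2.trans (hσ.2.2.trans hω.2.2.1)) ?_⟩⟩
    intro f hf
    obtain ⟨hfS, hfT⟩ := Finset.mem_sdiff.1 hf
    exact (Finset.mem_union.1 (sens_subset_of_mem_sres hω (hSsens hfS))).resolve_left
      fun h => hfT (Finset.mem_inter.2 ⟨hfS, h⟩)
  · exact mem_exts_of_regressS hreg (hmemΔ b hb) (hsens b hb) (hdisj b hb)
      (mem_exts_of_pext hσ ⟨hω.2.1, hω.2.2.1⟩ hω.1) hh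

theorem RegStarR.achieves {c : Plan V} {x y : Option (St V)} (h : RegStarR c x y)
    (hc : AllCasesPR c) {δ δ' σ : St V} (hx : x = some δ) (hy : y = some δ')
    (hσ : σ ∈ exts δ') : Achieves c σ δ := by
  induction h generalizing δ δ' σ with
  | bot => cases hx
  | empty => cases hx; cases hy; exact achieves_empty_iff.2 hσ
  | action a =>
    cases hx
    exact achieves_action_iff.2 (execIn_and_res_mem_exts_of_regressN_eq hy hσ)
  | caseBot | caseRBot => cases hy
  | caseGo a bs _ r _ hdisj ih =>
    cases hx
    cases hc with
    | pcase _ _ hpr hbr =>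
      exact achieves_pcase_of_regressS hpr hdisj hy hσ fun b hb ω hω =>
        ih b hb (hbr b hb) rfl rfl hω
  | seq c₁ c₂ _ y₀ _ h₂ h₁ ih₂ ih₁ =>
    cases hx
    cases hc with
    | seq hc₁ hc₂ =>
      cases y₀ with
      | none => cases h₁; cases hy
      | some δ₁ => exact (ih₁ hc₁ rfl hy hσ).seq fun σ₁ hσ₁ => ih₂ hc₂ rfl rfl hσ₁

/-! ## Completeness for normalized plans -/

theorem unknown_nonempty_of_spans {a : SAct V} {σ : St V} {χ : Finset (Form V)}
    {S : Finset V} (hχ : spans χ S) (hS : S.Nonempty) (hSsens : S ⊆ a.sens)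
    (hlive : ∀ ψ ∈ χ, ∃ ω ∈ sres a σ, holds ψ ω) : (a.unknown σ).Nonempty := by
  obtain ⟨f, hf⟩ := hS
  obtain ⟨φ, hφ⟩ := hχ.exists_base
  obtain ⟨ω₁, hω₁, hh₁⟩ := hlive _ ((hφ _).2 ⟨S, subset_rfl, rfl⟩)
  obtain ⟨ω₂, hω₂, hh₂⟩ := hlive _ ((hφ _).2 ⟨∅, Finset.empty_subset _, rfl⟩)
  have hfT : f ∈ ω₁.T := hh₁.1 (Finset.mem_union_right _ hf)
  have hfF : f ∈ ω₂.F := hh₂.2 (Finset.mem_union_right _ (by simpa))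
  refine ⟨f, Finset.mem_sdiff.2 ⟨hSsens hf, fun hσf => ?_⟩⟩
  rcases Finset.mem_union.1 hσf with h | h
  · exact Finset.disjoint_left.1 hω₂.1 (hω₂.2.1 h) hfF
  · exact Finset.disjoint_left.1 hω₁.1 hfT (hω₁.2.2.1 h)

theorem eq_of_holds_of_pairwise_mutEx {bs : List (Form V × Plan V)}
    (hp : bs.Pairwise fun b b' => MutEx b.1 b'.1) {b b' : Form V × Plan V}
    (hb : b ∈ bs) (hb' : b' ∈ bs) {s : St V} (hs : s.OK) (hh : holds b.1 s)
    (hh' : holds b'.1 s) : b = b' := by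
  have : Std.Symm fun b b' : Form V × Plan V => MutEx b.1 b'.1 := ⟨fun _ _ h => h.symm⟩
  by_contra hne
  rcases hp.forall hb hb' hne with h | h
  · exact h (hs.mono hh.1 hh'.2)
  · exact h (hs.mono hh'.1 hh.2)

/-- The outcomes making the unknown fluent `f` true resp. false (and all other unknown fluents
false) differ only at `f`, yet come from distinct members of `Δ`. -/
theorem unknown_subset_SaD {a : SAct V} {σ : St V} {Δ : Finset (St V)} (hσ : σ.OK)
    (happ : AppS a Δ) (himage : Δ.image σ.union = a.outcomes σ) : a.unknown σ ⊆ SaD a Δ := by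
  intro f hf
  by_contra hfX
  have hmem : ∀ P ⊆ a.unknown σ, ∃ δ ∈ Δ, σ.union δ = a.outcome σ P := fun P hP =>
    Finset.mem_image.1 (himage ▸ Finset.mem_image_of_mem _ (Finset.mem_powerset.2 hP))
  have hSaD : ∀ δ ∈ Δ, (σ.union δ).T ∩ SaD a Δ = δ.T ∩ SaD a Δ := fun δ hδ =>
    have hω := (SAct.mem_outcomes hσ).1 (himage ▸ Finset.mem_image_of_mem σ.union hδ)
    T_inter_eq_of_pext (pext_union_right σ δ) (happ.SaD_subset_sens.trans (happ.2 δ hδ))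
      (hω.1.mono_left Finset.inter_subset_left)
  obtain ⟨δ₁, h₁, e₁⟩ := hmem {f} (Finset.singleton_subset_iff.2 hf)
  obtain ⟨δ₂, h₂, e₂⟩ := hmem ∅ (Finset.empty_subset _)
  have h₁₂ : δ₁ = δ₂ := happ.eq_of_T_inter_SaD_eq h₁ h₂ <| by
    rw [← hSaD δ₁ h₁, ← hSaD δ₂ h₂, e₁, e₂]
    simp [SAct.outcome, hfX]
  have := congrArg (fun s => s.T ∩ a.unknown σ) (e₁.symm.trans (h₁₂ ▸ e₂))
  simp only [SAct.outcome_T_inter_unknown (Finset.singleton_subset_iff.2 hf),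
    SAct.outcome_T_inter_unknown (Finset.empty_subset _)] at this
  exact Finset.singleton_ne_empty f this

theorem exists_regressS_of_image_eq_outcomes {a : SAct V} {σ : St V} {Δ : Finset (St V)}
    (hσ : σ.OK) (hexec : a.execIn σ) (hU : (a.unknown σ).Nonempty)
    (hknown : ∀ δ ∈ Δ, a.sens ⊆ δ.T ∪ δ.F) (hinj : Set.InjOn σ.union Δ)
    (himage : Δ.image σ.union = a.outcomes σ) :
    ∃ δ', RegressS a Δ = some δ' ∧ σ ∈ exts δ' := by
  have happ : AppS a Δ := ⟨⟨σ.union, fun δ _ => pext_union_right σ δ, hinj,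
    himage ▸ SAct.strongApp_outcomes hσ hexec hU⟩, hknown⟩
  have hUX := unknown_subset_SaD hσ happ himage
  have hω : ∀ δ ∈ Δ, σ.union δ ∈ sres a σ := fun δ hδ =>
    (SAct.mem_outcomes hσ).1 (himage ▸ Finset.mem_image_of_mem _ hδ)
  refine ⟨_, regressS_eq_some_iff.2 ⟨happ, rfl⟩, hσ, ?_, ?_⟩
  · refine Finset.union_subset (fun f hf => ?_) hexec.1
    obtain ⟨hf, hfX⟩ := Finset.mem_sdiff.1 hf
    obtain ⟨δ, hδ, hfδ⟩ := Finset.mem_sup.1 hf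
    by_contra hfσ
    exact hfX (hUX ((SAct.sdiff_subset_unknown_of_mem_sres (hω δ hδ)).1
      (Finset.mem_sdiff.2 ⟨Finset.mem_union_right _ hfδ, hfσ⟩)))
  · refine Finset.union_subset (fun f hf => ?_) hexec.2
    obtain ⟨hf, hfX⟩ := Finset.mem_sdiff.1 hf
    obtain ⟨δ, hδ, hfδ⟩ := Finset.mem_sup.1 hf
    by_contra hfσ
    exact hfX (hUX ((SAct.sdiff_subset_unknown_of_mem_sres (hω δ hδ)).2
      (Finset.mem_sdiff.2 ⟨Finset.mem_union_right _ hfδ, hfσ⟩)))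

theorem exists_regressS_of_branches {a : SAct V} {σ : St V} {bs : List (Form V × Plan V)}
    (hσ : σ.OK) (hexec : a.execIn σ) (hU : (a.unknown σ).Nonempty)
    (hmutex : bs.Pairwise fun b b' => MutEx b.1 b'.1) (hsens : ∀ b ∈ bs, a.sens ⊆ b.1.1 ∪ b.1.2)
    (hcover : ∀ ω ∈ sres a σ, ∃ b ∈ bs, holds b.1 ω) {ω r : Form V × Plan V → St V}
    (hω : ∀ b ∈ bs, ω b ∈ sres a σ ∧ holds b.1 (ω b)) (hr : ∀ b ∈ bs, ω b ∈ exts (r b)) :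
    ∃ δ', RegressS a ((bs.map fun b => Rform b.1 (r b)).toFinset) = some δ' ∧ σ ∈ exts δ' := by
  have hknown : ∀ b ∈ bs, a.sens ⊆ (Rform b.1 (r b)).T ∪ (Rform b.1 (r b)).F := fun b hb =>
    (hsens b hb).trans (Finset.union_subset_union Finset.subset_union_right
      Finset.subset_union_right)
  have hunion : ∀ b ∈ bs, σ.union (Rform b.1 (r b)) = ω b := fun b hb =>
    union_eq_of_mem_sres (hω b hb).1 ⟨Finset.union_subset (hr b hb).2.1 (hω b hb).2.1,
      Finset.union_subset (hr b hb).2.2 (hω b hb).2.2⟩ (hknown b hb)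
  apply exists_regressS_of_image_eq_outcomes hσ hexec hU
  · simp only [List.mem_toFinset, List.mem_map]
    rintro _ ⟨b, hb, rfl⟩
    exact hknown b hb
  · simp only [Set.InjOn, Finset.mem_coe, List.mem_toFinset, List.mem_map]
    rintro _ ⟨b, hb, rfl⟩ _ ⟨b', hb', rfl⟩ h
    rw [hunion b hb, hunion b' hb'] at h
    rw [eq_of_holds_of_pairwise_mutEx hmutex hb hb' (hω b hb).1.1 (hω b hb).2 (h ▸ (hω b' hb').2)]
  · ext ω'
    simp only [Finset.mem_image, List.mem_toFinset, List.mem_map, SAct.mem_outcomes hσ]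
    constructor
    · rintro ⟨_, ⟨b, hb, rfl⟩, rfl⟩
      exact hunion b hb ▸ (hω b hb).1
    · intro hω'
      obtain ⟨b, hb, hh⟩ := hcover ω' hω'
      exact ⟨_, ⟨b, hb, rfl⟩, (hunion b hb).trans
        (sres_eq_of_holds (hω b hb).1 hω' (hsens b hb) (hω b hb).2 hh)⟩

theorem Regressable.not_achieves {c c' : Plan V} {σ δ : St V} (hr : Regressable c σ δ)
    (hc' : IsSubplan c' c) : ¬ Achieves c' σ δ :=
  fun h => hr.2.2 ⟨hr.2.1, c', hc', h⟩

theorem Regressable.of_action_seq {a : NAct V} {c : Plan V} {σ δ : St V}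
    (hr : Regressable (.seq (.action a) c) σ δ) : a.execIn σ ∧ Regressable c (a.res σ) δ := by
  obtain ⟨hexec, hach⟩ := achieves_action_seq_iff.1 hr.2.1
  refine ⟨hexec, by cases hr.1 with | seq _ h => exact h, hach,
    fun ⟨_, c', hsub, hach'⟩ => hr.not_achieves ?_ (achieves_action_seq_iff.2 ⟨hexec, hach'⟩)⟩
  exact Relation.TransGen.lift (Plan.seq (.action a)) (fun _ _ => Edit.seqR _) _ _ hsub

theorem Regressable.exists_holds_of_mem_pcase {a : SAct V} {bs : List (Form V × Plan V)}
    {σ δ : St V} (hr : Regressable (.pcase a bs) σ δ) {b : Form V × Plan V} (hb : b ∈ bs) :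
    ∃ ω ∈ sres a σ, holds b.1 ω := by
  by_contra! hdead
  obtain ⟨hexec, hach⟩ := achieves_pcase_iff.1 hr.2.1
  obtain ⟨l₁, l₂, rfl⟩ := List.append_of_mem hb
  refine hr.not_achieves (.single (Edit.dropBranch a b l₁ l₂)) <|
    achieves_pcase_iff.2 ⟨hexec, fun ω hω => ⟨?_, fun b' hb' => (hach ω hω).2 b' ?_⟩⟩
  · obtain ⟨b', hb', hh⟩ := (hach ω hω).1
    refine ⟨b', ?_, hh⟩
    simp only [List.mem_append, List.mem_cons] at hb' ⊢
    rcases hb' with h | rfl | h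
    exacts [.inl h, absurd hh (hdead ω hω), .inr h]
  · simp only [List.mem_append, List.mem_cons] at hb' ⊢
    tauto

theorem Regressable.of_pcase {a : SAct V} {bs : List (Form V × Plan V)} {σ δ ω : St V}
    (hr : Regressable (.pcase a bs) σ δ) {b : Form V × Plan V} (hb : b ∈ bs)
    (hω : ω ∈ sres a σ) (hh : holds b.1 ω) : Regressable b.2 ω δ := by
  obtain ⟨hexec, hach⟩ := achieves_pcase_iff.1 hr.2.1
  cases hr.1 with | pcase _ _ hpr hbr =>
  refine ⟨hbr b hb, (hach ω hω).2 b hb hh, fun ⟨_, p', hsub, hach'⟩ => ?_⟩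
  obtain ⟨l₁, l₂, rfl⟩ := List.append_of_mem hb
  refine hr.not_achieves (Relation.TransGen.lift (fun p => Plan.pcase a (l₁ ++ (b.1, p) :: l₂))
    (fun _ _ => Edit.inBranch a b.1 _ _ l₁ l₂) _ _ hsub) <|
    achieves_pcase_iff.2 ⟨hexec, fun ω' hω' => ⟨?_, fun b' hb' hh' => ?_⟩⟩
  · obtain ⟨b', hb', hh'⟩ := (hach ω' hω').1
    simp only [List.mem_append, List.mem_cons] at hb'
    rcases hb' with h | rfl | h
    · exact ⟨b', by simp [h], hh'⟩
    · exact ⟨(b'.1, p'), by simp, hh'⟩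
    · exact ⟨b', by simp [h], hh'⟩
  · simp only [List.mem_append, List.mem_cons] at hb'
    rcases hb' with h | rfl | h
    · exact (hach ω' hω').2 b' (by simp [h]) hh'
    · rwa [sres_eq_of_holds hω' hω (hpr.2 b (by simp)) hh' hh]
    · exact (hach ω' hω').2 b' (by simp [h]) hh'

theorem exists_regStarR_pcase {a : SAct V} {bs : List (Form V × Plan V)} {σ δ : St V}
    (hσ : σ.OK) (hwf : (Plan.pcase a bs).WF) (hr : Regressable (.pcase a bs) σ δ)
    (ih : ∀ b ∈ bs, ∀ σ : St V, σ.OK → b.2.WF → Regressable b.2 σ δ →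
      ∃ δ', RegStarR b.2 (some δ) (some δ') ∧ σ ∈ exts δ') :
    ∃ δ', RegStarR (.pcase a bs) (some δ) (some δ') ∧ σ ∈ exts δ' := by
  cases hwf with | pcase _ _ _ hmutex hwfb =>
  cases hr.1 with | pcase _ _ hpr _ =>
  obtain ⟨⟨S, hS, hSsens, hspan⟩, hsens⟩ := hpr
  obtain ⟨hexec, hach⟩ := achieves_pcase_iff.1 hr.2.1
  have : Nonempty (St V) := ⟨σ⟩
  choose! ω hω using fun b (hb : b ∈ bs) => hr.exists_holds_of_mem_pcase hb
  choose! r hr' using fun b (hb : b ∈ bs) =>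
    ih b hb (ω b) (hω b hb).1.1 (hwfb b hb) (hr.of_pcase hb (hω b hb).1 (hω b hb).2)
  have hU : (a.unknown σ).Nonempty := unknown_nonempty_of_spans hspan hS hSsens fun ψ hψ => by
    obtain ⟨b, hb, rfl⟩ : ∃ b ∈ bs, b.1 = ψ := by simpa using hψ
    exact ⟨ω b, hω b hb⟩
  obtain ⟨δ', hreg, hσδ'⟩ := exists_regressS_of_branches hσ hexec hU hmutex hsens
    (fun ω' hω' => (hach ω' hω').1) hω fun b hb => (hr' b hb).2
  refine ⟨δ', hreg ▸ RegStarR.caseGo a bs δ r (fun b hb => (hr' b hb).1) fun b hb => ?_, hσδ'⟩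
  obtain ⟨⟨hok, -⟩, hφT, hφF⟩ := hω b hb
  exact ⟨hok.mono hφT (hr' b hb).2.2.2, hok.symm.mono hφF (hr' b hb).2.2.1⟩

theorem normalized_regressable_regresses_general
    (σ δ : St V) (hσ : σ.OK)
    (c : Plan V) (hwf : c.WF) (hn : Normalized c)
    (hr : Regressable c σ δ) :
    ∃ δ' : St V, RegStarR c (some δ) (some δ') ∧ σ ∈ exts δ' := by
  induction hn generalizing σ with
  | empty => exact ⟨δ, .empty δ, achieves_empty_iff.1 hr.2.1⟩
  | single a =>
    obtain ⟨hexec, hres⟩ := achieves_action_iff.1 hr.2.1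
    obtain ⟨δ', hreg, hσδ'⟩ := exists_regressN_eq hσ hexec hres fun h =>
      hr.not_achieves (.single (.dropAct a)) (achieves_empty_iff.2 h)
    exact ⟨δ', hreg ▸ .action a δ, hσδ'⟩
  | cons a _ ih =>
    cases hwf with | seq _ hwf =>
    obtain ⟨hexec, hr'⟩ := hr.of_action_seq
    obtain ⟨δ₁, hreg₁, hδ₁⟩ := ih _ (NAct.res_OK hσ) hwf hr'
    obtain ⟨δ', hreg, hσδ'⟩ := exists_regressN_eq hσ hexec hδ₁ fun h =>
      hr.not_achieves (.single (.seqL _ (.dropAct a)))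
        (achieves_empty_seq_iff.2 (hreg₁.achieves hr'.1 rfl rfl h))
    exact ⟨δ', .seq _ _ δ _ _ hreg₁ (hreg ▸ .action a δ₁), hσδ'⟩
  | pcase a bs _ ih => exact exists_regStarR_pcase hσ hwf hr ih

/-- a normalized conditional plan that is regressable with respect to
`(σ,δ)` regresses to a p-state `δ' ≠ ⊥` with `σ ∈ ext(δ')`. -/
theorem normalized_regressable_regresses
    (σ δ : St V) (hσ : σ.OK) (hδ : δ.OK)
    (c : Plan V) (hwf : c.WF) (hn : Normalized c)
    (hr : Regressable c σ δ) :
    ∃ δ' : St V, RegStarR c (some δ) (some δ') ∧ σ ∈ exts δ' :=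
  normalized_regressable_regresses_general σ δ hσ c hwf hn hr
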